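/- Let q be a source with all q_i > 0 on a finite alphabet, and suppose Π admits exactly k proper I-projections of q. Under the conditions of ICET, for any ε > 0 small enough, the conditional probability that the empirical type ν^n lies within distance ε (total variation) of the set {p̂^1,...,p̂^k} of proper I-projections, given ν^n ∈ Π, converges to 1 as n → ∞. -/

import Mathlib

open Real Filter Topology Finset

/-- A probability mass function on `Fin m`. -/
def IsPMF {m : ℕ} (p : Fin m → ℝ) : Prop := (∀ i, 0 ≤ p i) ∧ ∑ i, p i = 1

/-- An `n`-type: a pmf whose entries are integer multiples of `1/n`. -/
def IsType {m : ℕ} (n : ℕ) (ν : Fin m → ℝ) : Prop :=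
  IsPMF ν ∧ ∀ i, ∃ k : ℕ, ν i = (k : ℝ) / n

/-- Multiplicity `Γ(ν) = n! / ∏ (n νᵢ)!` of an `n`-type. -/
noncomputable def mult {m : ℕ} (n : ℕ) (ν : Fin m → ℝ) : ℝ :=
  (n.factorial : ℝ) / ∏ i, (Nat.factorial ⌊(n : ℝ) * ν i⌋₊ : ℝ)

/-- Probability `π(ν; q) = Γ(ν) ∏ qᵢ^{n νᵢ}` of the type `ν` in `n` iid draws from `q`. -/
noncomputable def typeProb {m : ℕ} (n : ℕ) (ν q : Fin m → ℝ) : ℝ :=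
  mult n ν * ∏ i, q i ^ ((n : ℝ) * ν i)

/-- Kullback–Leibler divergence (with `0 log 0 = 0`, automatic since `Real.log 0 = 0`). -/
noncomputable def KL {m : ℕ} (p q : Fin m → ℝ) : ℝ := ∑ i, p i * Real.log (p i / q i)

/-- Shannon entropy. -/
noncomputable def entH {m : ℕ} (ν : Fin m → ℝ) : ℝ := -∑ i, ν i * Real.log (ν i)

/-- Total variation metric `d(a,b) = ∑ |aᵢ - bᵢ|`. -/
noncomputable def tv {m : ℕ} (a b : Fin m → ℝ) : ℝ := ∑ i, |a i - b i|

/-- The finite set of all `n`-types on `Fin m`. -/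
noncomputable def typeFinset (n m : ℕ) : Finset (Fin m → ℝ) := by
  classical
  exact ((Fintype.piFinset (fun _ : Fin m => Finset.range (n + 1))).filter
      (fun k => ∑ i, k i = n)).image (fun k i => (k i : ℝ) / n)



/-- Binomial term unimodality: step up. -/
lemma binomStepUp {n a b : ℕ} (hab : a + b = n) {i : ℕ} (hi : i < a) :
    n.choose i * a ^ i * b ^ (n - i) ≤ n.choose (i + 1) * a ^ (i + 1) * b ^ (n - (i + 1)) := by
  have han : a ≤ n := by omega
  have key : n.choose i * b ≤ n.choose (i + 1) * a := by
    have h1 : b * (i + 1) ≤ (n - i) * a := by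
      have h2 : b * (i + 1) ≤ b * a := Nat.mul_le_mul_left b hi
      have h3 : b * a ≤ (n - i) * a := Nat.mul_le_mul_right a (by omega)
      omega
    have hch := Nat.choose_succ_right_eq n i
    have h2 : n.choose i * b * (i + 1) ≤ n.choose (i + 1) * a * (i + 1) := by
      calc n.choose i * b * (i + 1) = n.choose i * (b * (i + 1)) := by ring
        _ ≤ n.choose i * ((n - i) * a) := Nat.mul_le_mul_left _ h1
        _ = (n.choose i * (n - i)) * a := by ring
        _ = (n.choose (i + 1) * (i + 1)) * a := by rw [hch]
        _ = n.choose (i + 1) * a * (i + 1) := by ring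
    exact Nat.le_of_mul_le_mul_right h2 (by omega)
  have hexp : n - i = (n - (i + 1)) + 1 := by omega
  calc n.choose i * a ^ i * b ^ (n - i)
      = (n.choose i * b) * (a ^ i * b ^ (n - (i + 1))) := by rw [hexp]; ring
    _ ≤ (n.choose (i + 1) * a) * (a ^ i * b ^ (n - (i + 1))) := Nat.mul_le_mul_right _ key
    _ = n.choose (i + 1) * a ^ (i + 1) * b ^ (n - (i + 1)) := by ring

/-- Binomial term unimodality: step down. -/
lemma binomStepDown {n a b : ℕ} (hab : a + b = n) {i : ℕ} (hia : a ≤ i) (hin : i < n) :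
    n.choose (i + 1) * a ^ (i + 1) * b ^ (n - (i + 1)) ≤ n.choose i * a ^ i * b ^ (n - i) := by
  have key : n.choose (i + 1) * a ≤ n.choose i * b := by
    have h1 : (n - i) * a ≤ b * (i + 1) := by
      have h2 : (n - i) * a ≤ b * a := Nat.mul_le_mul_right a (by omega)
      have h3 : b * a ≤ b * (i + 1) := Nat.mul_le_mul_left b (by omega)
      omega
    have hch := Nat.choose_succ_right_eq n i
    have h2 : n.choose (i + 1) * a * (i + 1) ≤ n.choose i * b * (i + 1) := by
      calc n.choose (i + 1) * a * (i + 1) = (n.choose (i + 1) * (i + 1)) * a := by ring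
        _ = (n.choose i * (n - i)) * a := by rw [hch]
        _ = n.choose i * ((n - i) * a) := by ring
        _ ≤ n.choose i * (b * (i + 1)) := Nat.mul_le_mul_left _ h1
        _ = n.choose i * b * (i + 1) := by ring
    exact Nat.le_of_mul_le_mul_right h2 (by omega)
  have hexp : n - i = (n - (i + 1)) + 1 := by omega
  calc n.choose (i + 1) * a ^ (i + 1) * b ^ (n - (i + 1))
      = (n.choose (i + 1) * a) * (a ^ i * b ^ (n - (i + 1))) := by ring
    _ ≤ (n.choose i * b) * (a ^ i * b ^ (n - (i + 1))) := Nat.mul_le_mul_right _ key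
    _ = n.choose i * a ^ i * b ^ (n - i) := by rw [hexp]; ring

/-- The `a`-th binomial term is maximal. -/
lemma binomTermLeMax {n a b : ℕ} (hab : a + b = n) :
    ∀ i ≤ n, n.choose i * a ^ i * b ^ (n - i) ≤ n.choose a * a ^ a * b ^ b := by
  have hb : n - a = b := by omega
  have up : ∀ d i, i + d = a → n.choose i * a ^ i * b ^ (n - i) ≤ n.choose a * a ^ a * b ^ (n - a) := by
    intro d
    induction d with
    | zero =>
      intro i h
      have : i = a := by omega
      subst this
      exact le_rfl
    | succ d ih =>
      intro i h
      have hi : i < a := by omega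
      exact le_trans (binomStepUp hab hi) (ih (i + 1) (by omega))
  have down : ∀ d i, a + d = i → i ≤ n →
      n.choose i * a ^ i * b ^ (n - i) ≤ n.choose a * a ^ a * b ^ (n - a) := by
    intro d
    induction d with
    | zero =>
      intro i h _
      have : i = a := by omega
      subst this
      exact le_rfl
    | succ d ih =>
      intro i h hin
      have hi : i = (a + d) + 1 := by omega
      subst hi
      exact le_trans (binomStepDown hab (by omega) (by omega)) (ih (a + d) (by omega) (by omega))
  intro i hi
  rcases le_total i a with h | h
  · have := up (a - i) i (by omega)
    rwa [hb] at this
  · have := down (i - a) i (by omega) hi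
    rwa [hb] at this

/-- Single binomial term is at most the full power, and `(n+1)` times the `a`-term dominates. -/
lemma binomTermLePow {n a b : ℕ} (hab : a + b = n) :
    n.choose a * a ^ a * b ^ b ≤ n ^ n := by
  have ha : a ≤ n := by omega
  have hb : n - a = b := by omega
  calc n.choose a * a ^ a * b ^ b = a ^ a * b ^ (n - a) * n.choose a := by rw [hb]; ring
    _ ≤ ∑ i ∈ Finset.range (n + 1), a ^ i * b ^ (n - i) * n.choose i :=
        Finset.single_le_sum (f := fun i => a ^ i * b ^ (n - i) * n.choose i)
          (fun i _ => Nat.zero_le _) (Finset.mem_range.2 (by omega))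
    _ = (a + b) ^ n := (add_pow a b n).symm
    _ = n ^ n := by rw [hab]

lemma powLeSuccMulTerm {n a b : ℕ} (hab : a + b = n) :
    n ^ n ≤ (n + 1) * (n.choose a * a ^ a * b ^ b) := by
  calc n ^ n = (a + b) ^ n := by rw [hab]
    _ = ∑ i ∈ Finset.range (n + 1), a ^ i * b ^ (n - i) * n.choose i := add_pow a b n
    _ ≤ (n + 1) • (n.choose a * a ^ a * b ^ b) := by
        refine Finset.sum_le_card_nsmul _ _ _ ?_ |>.trans (by rw [Finset.card_range])
        intro i hi
        rw [Finset.mem_range] at hi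
        calc a ^ i * b ^ (n - i) * n.choose i = n.choose i * a ^ i * b ^ (n - i) := by ring
          _ ≤ n.choose a * a ^ a * b ^ b := binomTermLeMax hab i (by omega)
    _ = (n + 1) * (n.choose a * a ^ a * b ^ b) := by rw [smul_eq_mul]

/-- Natural-number form of `Γ(ν) e^{n H(ν)} ≤ 1`. -/
lemma natUpper {ι : Type*} [DecidableEq ι] (s : Finset ι) (f : ι → ℕ) :
    (∑ i ∈ s, f i).factorial * ∏ i ∈ s, f i ^ f i ≤
      (∑ i ∈ s, f i) ^ (∑ i ∈ s, f i) * ∏ i ∈ s, (f i).factorial := by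
  induction s using Finset.induction_on with
  | empty => simp
  | insert _ _ hj ih =>
    rename_i j t
    rw [Finset.sum_insert hj, Finset.prod_insert hj, Finset.prod_insert hj]
    set a := f j with ha
    set b := ∑ i ∈ t, f i with hbdef
    set n := a + b with hn
    have hfac : n.factorial = n.choose a * a.factorial * b.factorial := by
      have := Nat.choose_mul_factorial_mul_factorial (show a ≤ n by omega)
      have hb : n - a = b := by omega
      rw [hb] at this
      omega
    calc n.factorial * (a ^ a * ∏ i ∈ t, f i ^ f i)
        = (n.choose a * a ^ a) * a.factorial * (b.factorial * ∏ i ∈ t, f i ^ f i) := by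
          rw [hfac]; ring
      _ ≤ (n.choose a * a ^ a) * a.factorial * (b ^ b * ∏ i ∈ t, (f i).factorial) := by
          exact Nat.mul_le_mul_left _ ih
      _ = (n.choose a * a ^ a * b ^ b) * (a.factorial * ∏ i ∈ t, (f i).factorial) := by ring
      _ ≤ n ^ n * (a.factorial * ∏ i ∈ t, (f i).factorial) :=
          Nat.mul_le_mul_right _ (binomTermLePow rfl)

/-- Natural-number form of `e^{n H(ν)} ≤ (n+1)^m Γ(ν)`. -/
lemma natLower {ι : Type*} [DecidableEq ι] (s : Finset ι) (f : ι → ℕ) :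
    (∑ i ∈ s, f i) ^ (∑ i ∈ s, f i) * ∏ i ∈ s, (f i).factorial ≤
      (∑ i ∈ s, f i + 1) ^ s.card * ((∑ i ∈ s, f i).factorial * ∏ i ∈ s, f i ^ f i) := by
  induction s using Finset.induction_on with
  | empty => simp
  | insert _ _ hj ih =>
    rename_i j t
    rw [Finset.sum_insert hj, Finset.prod_insert hj, Finset.prod_insert hj,
      Finset.card_insert_of_notMem hj]
    set a := f j with ha
    set b := ∑ i ∈ t, f i with hbdef
    set n := a + b with hn
    have hfac : n.factorial = n.choose a * a.factorial * b.factorial := by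
      have := Nat.choose_mul_factorial_mul_factorial (show a ≤ n by omega)
      have hb : n - a = b := by omega
      rw [hb] at this
      omega
    calc n ^ n * (a.factorial * ∏ i ∈ t, (f i).factorial)
        ≤ ((n + 1) * (n.choose a * a ^ a * b ^ b)) * (a.factorial * ∏ i ∈ t, (f i).factorial) :=
          Nat.mul_le_mul_right _ (powLeSuccMulTerm rfl)
      _ = (n + 1) * (n.choose a * a ^ a * a.factorial) * (b ^ b * ∏ i ∈ t, (f i).factorial) := by
          ring
      _ ≤ (n + 1) * (n.choose a * a ^ a * a.factorial) *
            ((b + 1) ^ t.card * (b.factorial * ∏ i ∈ t, f i ^ f i)) :=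
          Nat.mul_le_mul_left _ ih
      _ ≤ (n + 1) * (n.choose a * a ^ a * a.factorial) *
            ((n + 1) ^ t.card * (b.factorial * ∏ i ∈ t, f i ^ f i)) := by
          refine Nat.mul_le_mul_left _ (Nat.mul_le_mul_right _ ?_)
          exact Nat.pow_le_pow_left (by omega) _
      _ = (n + 1) ^ (t.card + 1) * ((n.choose a * a.factorial * b.factorial) *
            (a ^ a * ∏ i ∈ t, f i ^ f i)) := by ring
      _ = (n + 1) ^ (t.card + 1) * (n.factorial * (a ^ a * ∏ i ∈ t, f i ^ f i)) := by
          rw [hfac]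

section RealBounds

variable {m n : ℕ}

lemma natPowCastPos (a : ℕ) : (0:ℝ) < (a : ℝ) ^ a := by
  rcases Nat.eq_zero_or_pos a with h | h
  · simp [h]
  · exact pow_pos (by exact_mod_cast h) _

lemma typeProb_eq (hn : 0 < n) (kk : Fin m → ℕ) (q : Fin m → ℝ) :
    typeProb n (fun i => (kk i : ℝ) / n) q
      = ((n.factorial : ℝ) * ∏ i, q i ^ (kk i)) / ∏ i, ((kk i).factorial : ℝ) := by
  have hne : (n : ℝ) ≠ 0 := Nat.cast_ne_zero.2 hn.ne'
  have hcan : ∀ i, (n : ℝ) * ((kk i : ℝ) / n) = (kk i : ℝ) := by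
    intro i; field_simp
  have h1 : (∏ i, (Nat.factorial ⌊(n : ℝ) * ((kk i : ℝ) / n)⌋₊ : ℝ))
      = ∏ i, ((kk i).factorial : ℝ) :=
    Finset.prod_congr rfl fun i _ => by rw [hcan i, Nat.floor_natCast]
  have h2 : (∏ i, q i ^ ((n : ℝ) * ((kk i : ℝ) / n))) = ∏ i, q i ^ (kk i) :=
    Finset.prod_congr rfl fun i _ => by rw [hcan i, Real.rpow_natCast]
  simp only [typeProb, mult]
  rw [h1, h2, div_mul_eq_mul_div]

lemma exp_KL_eq (hn : 0 < n) (kk : Fin m → ℕ) (hsum : ∑ i, kk i = n)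
    (q : Fin m → ℝ) (hq : ∀ i, 0 < q i) :
    Real.exp (-((n : ℝ) * KL (fun i => (kk i : ℝ) / n) q))
      = ((n : ℝ) ^ n * ∏ i, q i ^ (kk i)) / ∏ i, ((kk i : ℝ)) ^ (kk i) := by
  have hne : (n : ℝ) ≠ 0 := Nat.cast_ne_zero.2 hn.ne'
  have hcan : ∀ i, (n : ℝ) * ((kk i : ℝ) / n) = (kk i : ℝ) := by
    intro i; field_simp
  have hKL : (n : ℝ) * KL (fun i => (kk i : ℝ) / n) q
      = ∑ i, (kk i : ℝ) * Real.log (((kk i : ℝ) / n) / q i) := by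
    unfold KL
    rw [Finset.mul_sum]
    exact Finset.sum_congr rfl fun i _ => by rw [← mul_assoc, hcan i]
  have hterm : ∀ i, Real.exp (-((kk i : ℝ) * Real.log (((kk i : ℝ) / n) / q i)))
      = ((n : ℝ) * q i) ^ (kk i) / ((kk i : ℝ)) ^ (kk i) := by
    intro i
    rcases Nat.eq_zero_or_pos (kk i) with h0 | hpos
    · simp [h0]
    · have hk0 : (0:ℝ) < (kk i : ℝ) := by exact_mod_cast hpos
      have hr : (0:ℝ) < ((kk i : ℝ) / n) / q i := by
        have := hq i
        have : (0:ℝ) < (n:ℝ) := by exact_mod_cast hn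
        positivity
      have hinv : (((kk i : ℝ) / n) / q i)⁻¹ = ((n : ℝ) * q i) / (kk i : ℝ) := by
        field_simp
      have h1 : -((kk i : ℝ) * Real.log (((kk i : ℝ) / n) / q i))
          = Real.log ((((kk i : ℝ) / n) / q i)⁻¹) * (kk i : ℝ) := by
        rw [Real.log_inv]; ring
      rw [h1, ← Real.rpow_def_of_pos (inv_pos.2 hr), hinv, Real.rpow_natCast, div_pow]
  calc Real.exp (-((n : ℝ) * KL (fun i => (kk i : ℝ) / n) q))
      = Real.exp (∑ i, -((kk i : ℝ) * Real.log (((kk i : ℝ) / n) / q i))) := by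
        rw [hKL, Finset.sum_neg_distrib]
    _ = ∏ i, Real.exp (-((kk i : ℝ) * Real.log (((kk i : ℝ) / n) / q i))) := Real.exp_sum _ _
    _ = ∏ i, ((n : ℝ) * q i) ^ (kk i) / ((kk i : ℝ)) ^ (kk i) :=
        Finset.prod_congr rfl fun i _ => hterm i
    _ = (∏ i, ((n : ℝ) * q i) ^ (kk i)) / ∏ i, ((kk i : ℝ)) ^ (kk i) :=
        Finset.prod_div_distrib _ _
    _ = ((n : ℝ) ^ n * ∏ i, q i ^ (kk i)) / ∏ i, ((kk i : ℝ)) ^ (kk i) := by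
        congr 1
        rw [show (∏ i, ((n : ℝ) * q i) ^ (kk i)) = (∏ i, (n:ℝ) ^ (kk i)) * ∏ i, q i ^ (kk i) by
          rw [← Finset.prod_mul_distrib]; exact Finset.prod_congr rfl fun i _ => mul_pow _ _ _]
        rw [Finset.prod_pow_eq_pow_sum, hsum]

lemma typeProb_le_exp (hn : 0 < n) (kk : Fin m → ℕ) (hsum : ∑ i, kk i = n)
    (q : Fin m → ℝ) (hq : ∀ i, 0 < q i) :
    typeProb n (fun i => (kk i : ℝ) / n) q
      ≤ Real.exp (-((n : ℝ) * KL (fun i => (kk i : ℝ) / n) q)) := by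
  rw [typeProb_eq hn kk q, exp_KL_eq hn kk hsum q hq]
  have hkfac : (0:ℝ) < ∏ i, ((kk i).factorial : ℝ) :=
    Finset.prod_pos fun i _ => by exact_mod_cast (kk i).factorial_pos
  have hkk : (0:ℝ) < ∏ i, ((kk i : ℝ)) ^ (kk i) :=
    Finset.prod_pos fun i _ => natPowCastPos (kk i)
  rw [div_le_div_iff₀ hkfac hkk]
  have hnat := natUpper (Finset.univ : Finset (Fin m)) kk
  rw [hsum] at hnat
  have hcast : ((n.factorial : ℝ)) * ∏ i, ((kk i : ℝ)) ^ (kk i)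
      ≤ (n : ℝ) ^ n * ∏ i, ((kk i).factorial : ℝ) := by exact_mod_cast hnat
  have hqprod : (0:ℝ) ≤ ∏ i, q i ^ kk i :=
    Finset.prod_nonneg fun i _ => pow_nonneg (hq i).le _
  have := mul_le_mul_of_nonneg_right hcast hqprod
  nlinarith [this]

lemma exp_le_typeProb (hn : 0 < n) (kk : Fin m → ℕ) (hsum : ∑ i, kk i = n)
    (q : Fin m → ℝ) (hq : ∀ i, 0 < q i) :
    Real.exp (-((n : ℝ) * KL (fun i => (kk i : ℝ) / n) q))
      ≤ ((n : ℝ) + 1) ^ m * typeProb n (fun i => (kk i : ℝ) / n) q := by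
  rw [typeProb_eq hn kk q, exp_KL_eq hn kk hsum q hq, mul_div_assoc']
  have hkfac : (0:ℝ) < ∏ i, ((kk i).factorial : ℝ) :=
    Finset.prod_pos fun i _ => by exact_mod_cast (kk i).factorial_pos
  have hkk : (0:ℝ) < ∏ i, ((kk i : ℝ)) ^ (kk i) :=
    Finset.prod_pos fun i _ => natPowCastPos (kk i)
  rw [div_le_div_iff₀ hkk hkfac]
  have hnat := natLower (Finset.univ : Finset (Fin m)) kk
  rw [hsum, Finset.card_univ, Fintype.card_fin] at hnat
  have hcast : (n : ℝ) ^ n * ∏ i, ((kk i).factorial : ℝ)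
      ≤ ((n : ℝ) + 1) ^ m * ((n.factorial : ℝ) * ∏ i, ((kk i : ℝ)) ^ (kk i)) := by
    exact_mod_cast hnat
  have hqprod : (0:ℝ) ≤ ∏ i, q i ^ kk i :=
    Finset.prod_nonneg fun i _ => pow_nonneg (hq i).le _
  have := mul_le_mul_of_nonneg_right hcast hqprod
  nlinarith [this]

end RealBounds

section TypeSet

variable {m n : ℕ}

lemma mem_typeFinset {ν : Fin m → ℝ} :
    ν ∈ typeFinset n m ↔ ∃ kk : Fin m → ℕ, (∑ i, kk i = n) ∧ ν = fun i => (kk i : ℝ) / n := by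
  classical
  unfold typeFinset
  simp only [Finset.mem_image, Finset.mem_filter, Fintype.mem_piFinset, Finset.mem_range]
  constructor
  · rintro ⟨kk, ⟨-, hsum⟩, rfl⟩
    exact ⟨kk, hsum, rfl⟩
  · rintro ⟨kk, hsum, rfl⟩
    refine ⟨kk, ⟨fun i => ?_, hsum⟩, rfl⟩
    have : kk i ≤ ∑ j, kk j := Finset.single_le_sum (fun j _ => Nat.zero_le _) (Finset.mem_univ i)
    omega

lemma isType_mem_typeFinset (hn : 0 < n) {ν : Fin m → ℝ} (h : IsType n ν) :
    ν ∈ typeFinset n m := by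
  classical
  have hne : (n : ℝ) ≠ 0 := Nat.cast_ne_zero.2 hn.ne'
  choose kk hkk using h.2
  rw [mem_typeFinset]
  refine ⟨kk, ?_, funext hkk⟩
  have hsum : ∑ i, ((kk i : ℝ) / n) = 1 := by
    rw [← h.1.2]; exact Finset.sum_congr rfl fun i _ => (hkk i).symm
  rw [← Finset.sum_div] at hsum
  have : (↑(∑ i, kk i) : ℝ) = n := by
    push_cast
    field_simp at hsum
    linarith [hsum]
  exact_mod_cast this

lemma pmf_of_mem_typeFinset (hn : 0 < n) {ν : Fin m → ℝ} (h : ν ∈ typeFinset n m) :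
    IsPMF ν := by
  have hne : (n : ℝ) ≠ 0 := Nat.cast_ne_zero.2 hn.ne'
  obtain ⟨kk, hsum, rfl⟩ := mem_typeFinset.1 h
  constructor
  · intro i; positivity
  · rw [← Finset.sum_div]
    rw [show ∑ i, ((kk i : ℝ)) = (n : ℝ) by exact_mod_cast congrArg Nat.cast hsum]
    field_simp

lemma card_typeFinset_le : (typeFinset n m).card ≤ (n + 1) ^ m := by
  classical
  unfold typeFinset
  refine le_trans Finset.card_image_le (le_trans (Finset.card_filter_le _ _) ?_)
  rw [Fintype.card_piFinset]
  simp [Finset.card_range]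

lemma typeProb_nonneg {ν q : Fin m → ℝ} (hq : ∀ i, 0 < q i) : 0 ≤ typeProb n ν q := by
  unfold typeProb mult
  have h1 : (0:ℝ) ≤ (n.factorial : ℝ) / ∏ i, (Nat.factorial ⌊(n : ℝ) * ν i⌋₊ : ℝ) := by
    apply div_nonneg (by positivity)
    exact Finset.prod_nonneg fun i _ => by positivity
  exact mul_nonneg h1 (Finset.prod_nonneg fun i _ => (Real.rpow_pos_of_pos (hq i) _).le)

lemma typeProb_pos {ν q : Fin m → ℝ} (hq : ∀ i, 0 < q i) : 0 < typeProb n ν q := by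
  unfold typeProb mult
  have h1 : (0:ℝ) < (n.factorial : ℝ) / ∏ i, (Nat.factorial ⌊(n : ℝ) * ν i⌋₊ : ℝ) := by
    apply div_pos (by exact_mod_cast n.factorial_pos)
    exact Finset.prod_pos fun i _ => by exact_mod_cast (Nat.factorial_pos _)
  exact mul_pos h1 (Finset.prod_pos fun i _ => Real.rpow_pos_of_pos (hq i) _)

end TypeSet

section Analysis

variable {m : ℕ}

lemma continuous_KL (q : Fin m → ℝ) (hq : ∀ i, 0 < q i) :
    Continuous fun p : Fin m → ℝ => KL p q := by
  unfold KL
  apply continuous_finset_sum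
  intro i _
  have hrw : (fun p : Fin m → ℝ => p i * Real.log (p i / q i))
      = fun p => q i * ((p i / q i) * Real.log (p i / q i)) := by
    funext p
    rw [← mul_assoc, mul_div_cancel₀ _ (hq i).ne']
  rw [hrw]
  exact continuous_const.mul
    (Real.continuous_mul_log.comp (by fun_prop : Continuous fun p : Fin m → ℝ => p i / q i))

lemma continuous_tv (b : Fin m → ℝ) : Continuous fun p : Fin m → ℝ => tv p b := by
  unfold tv
  exact continuous_finset_sum _ fun i _ => ((continuous_apply i).sub continuous_const).abs

lemma tv_self (a : Fin m → ℝ) : tv a a = 0 := by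
  unfold tv; simp

lemma isCompact_closure_S {S : Set (Fin m → ℝ)} (hsub : ∀ p ∈ S, IsPMF p) :
    IsCompact (closure S) := by
  have hBox : IsCompact (Set.pi Set.univ fun _ : Fin m => Set.Icc (0:ℝ) 1) :=
    isCompact_univ_pi fun _ => isCompact_Icc
  refine hBox.of_isClosed_subset isClosed_closure (closure_minimal ?_ hBox.isClosed)
  intro p hp
  rcases hsub p hp with ⟨hpos, hsum⟩
  intro i _
  refine ⟨hpos i, ?_⟩
  calc p i ≤ ∑ j, p j := Finset.single_le_sum (fun j _ => hpos j) (Finset.mem_univ i)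
    _ = 1 := hsum

lemma exists_delta {k : ℕ} (q : Fin m → ℝ) (hqpos : ∀ i, 0 < q i)
    (S : Set (Fin m → ℝ)) (hsub : ∀ p ∈ S, IsPMF p)
    (phat : Fin k → Fin m → ℝ) (c : ℝ)
    (hexact : ∀ p ∈ closure S, KL p q ≤ c → ∃ j, p = phat j)
    {ε : ℝ} (hε : 0 < ε) :
    ∃ δ > 0, ∀ p ∈ closure S, (∀ j, ε ≤ tv p (phat j)) → c + δ ≤ KL p q := by
  classical
  set K : Set (Fin m → ℝ) := closure S ∩ ⋂ j, {p | ε ≤ tv p (phat j)} with hK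
  rcases K.eq_empty_or_nonempty with hKe | hKne
  · refine ⟨1, one_pos, fun p hp hfar => ?_⟩
    exfalso
    have : p ∈ K := ⟨hp, Set.mem_iInter.2 fun j => hfar j⟩
    rw [hKe] at this
    exact this
  · have hKclosed : IsClosed K := by
      refine isClosed_closure.inter (isClosed_iInter fun j => ?_)
      exact isClosed_le continuous_const (continuous_tv (phat j))
    have hKcompact : IsCompact K :=
      (isCompact_closure_S hsub).of_isClosed_subset hKclosed Set.inter_subset_left
    obtain ⟨p₀, hp₀K, hp₀min⟩ :=
      hKcompact.exists_isMinOn hKne ((continuous_KL q hqpos).continuousOn)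
    have hp₀c : c < KL p₀ q := by
      by_contra hcon
      push_neg at hcon
      obtain ⟨j, rfl⟩ := hexact p₀ hp₀K.1 hcon
      have := Set.mem_iInter.1 hp₀K.2 j
      rw [Set.mem_setOf_eq, tv_self] at this
      linarith
    refine ⟨KL p₀ q - c, by linarith, fun p hp hfar => ?_⟩
    have hpK : p ∈ K := ⟨hp, Set.mem_iInter.2 fun j => hfar j⟩
    have := hp₀min hpK
    simp only [Set.mem_setOf_eq] at this
    linarith [this]

lemma tendsto_g (δ : ℝ) (hδ : 0 < δ) (M : ℕ) :
    Tendsto (fun n : ℕ => ((n : ℝ) + 1) ^ M * Real.exp (-((n : ℝ) * δ))) atTop (𝓝 0) := by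
  have hf : Tendsto (fun x : ℝ => x ^ M * Real.exp (-x)) atTop (𝓝 0) :=
    tendsto_pow_mul_exp_neg_atTop_nhds_zero M
  have harg : Tendsto (fun n : ℕ => δ * ((n : ℝ) + 1)) atTop atTop := by
    apply Tendsto.const_mul_atTop hδ
    exact tendsto_atTop_add_const_right _ 1 tendsto_natCast_atTop_atTop
  have hcomp := (hf.comp harg).const_mul ((1 / δ) ^ M * Real.exp δ)
  rw [mul_zero] at hcomp
  refine hcomp.congr fun n => ?_
  simp only [Function.comp_apply, mul_pow]
  have hδne : δ ≠ 0 := hδ.ne'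
  have h1 : (1 / δ) ^ M * δ ^ M = 1 := by
    rw [← mul_pow]; field_simp; simp
  have hexp : Real.exp δ * Real.exp (-(δ * ((n:ℝ) + 1))) = Real.exp (-((n : ℝ) * δ)) := by
    rw [← Real.exp_add]; ring_nf
  calc (1 / δ) ^ M * Real.exp δ * (δ ^ M * ((n:ℝ)+1) ^ M * Real.exp (-(δ * ((n:ℝ)+1))))
      = ((1 / δ) ^ M * δ ^ M) * (((n:ℝ)+1) ^ M * (Real.exp δ * Real.exp (-(δ * ((n:ℝ)+1))))) := by
        ring
    _ = ((n:ℝ) + 1) ^ M * Real.exp (-((n : ℝ) * δ)) := by rw [h1, hexp, one_mul]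

end Analysis

open scoped Classical in
/-- Conditional probability that the empirical `n`-type lies in `A`, given it lies in `B`;
expressed as a ratio of type-probability sums. -/
noncomputable def condProb {m : ℕ} (n : ℕ) (q : Fin m → ℝ)
    (A B : Set (Fin m → ℝ)) : ℝ :=
  (∑ ν ∈ (typeFinset n m).filter (fun ν => ν ∈ A ∩ B), typeProb n ν q) /
  (∑ ν ∈ (typeFinset n m).filter (fun ν => ν ∈ B), typeProb n ν q)

/-- Under the ICET conditions (exactly k proper I-projections of q on S),
for all small enough ε > 0 the conditional probability that the empirical type lies within
total-variation distance ε of the set {p̂¹,…,p̂ᵏ}, given it lies in S, tends to 1. -/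
theorem stmt16 {m : ℕ} (q : Fin m → ℝ) (hq : IsPMF q) (hqpos : ∀ i, 0 < q i)
    (S : Set (Fin m → ℝ)) (hsub : ∀ p ∈ S, IsPMF p)
    (k : ℕ) (hk : 0 < k) (phat : Fin k → Fin m → ℝ) (hinj : Function.Injective phat)
    (c : ℝ) (hval : ∀ j, KL (phat j) q = c)
    (hmem : ∀ j, phat j ∈ S) (hmin : ∀ j, ∀ p ∈ S, KL (phat j) q ≤ KL p q)
    (hproper : ∀ j, phat j ∈ closure (S \ {phat j}))
    (hexact : ∀ p ∈ closure S, KL p q ≤ c → ∃ j, p = phat j)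
    (happrox : ∀ j, ∃ T : ℕ → Fin m → ℝ,
      (∀ᶠ n in atTop, IsType n (T n) ∧ T n ∈ S) ∧ Tendsto T atTop (𝓝 (phat j))) :
    ∃ ε₀ > 0, ∀ ε, 0 < ε → ε < ε₀ →
      Tendsto (fun n => condProb n q {p | ∃ j, tv p (phat j) < ε} S) atTop (𝓝 1) := by
  classical
  refine ⟨1, one_pos, fun ε hε hε1 => ?_⟩
  obtain ⟨δ, hδ, hδbound⟩ := exists_delta q hqpos S hsub phat c hexact hε
  set j₀ : Fin k := ⟨0, hk⟩ with hj₀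
  obtain ⟨T, hT, hTlim⟩ := happrox j₀
  set A : Set (Fin m → ℝ) := {p | ∃ j, tv p (phat j) < ε} with hA
  clear_value A
  set D : ℕ → ℝ := fun n => ∑ ν ∈ (typeFinset n m).filter (fun ν => ν ∈ S), typeProb n ν q
    with hD
  set F : ℕ → ℝ := fun n =>
      ∑ ν ∈ (typeFinset n m).filter (fun ν => ν ∈ S ∧ ν ∉ A), typeProb n ν q with hF
  set g : ℕ → ℝ := fun n => ((n : ℝ) + 1) ^ (2 * m) * Real.exp (-((n : ℝ) * (δ / 2))) with hg
  clear_value D F g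
  have e3 : ∀ᶠ n in atTop, KL (T n) q ≤ c + δ / 2 := by
    have hcont : Tendsto (fun n => KL (T n) q) atTop (𝓝 (KL (phat j₀) q)) :=
      ((continuous_KL q hqpos).tendsto (phat j₀)).comp hTlim
    rw [hval j₀] at hcont
    exact hcont.eventually_le_const (by linarith)
  have e4 : ∀ᶠ n in atTop, tv (T n) (phat j₀) < ε := by
    have hcont : Tendsto (fun n => tv (T n) (phat j₀)) atTop (𝓝 (tv (phat j₀) (phat j₀))) :=
      ((continuous_tv (phat j₀)).tendsto (phat j₀)).comp hTlim
    rw [tv_self] at hcont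
    exact hcont.eventually_lt_const hε
  have key : ∀ᶠ n in atTop, 0 < D n ∧ condProb n q A S = 1 - F n / D n ∧
      0 ≤ F n / D n ∧ F n / D n ≤ g n := by
    filter_upwards [hT, e3, e4, eventually_gt_atTop 0] with n hTn hKLn htvn hn
    obtain ⟨hTtype, hTS⟩ := hTn
    have hTmem : T n ∈ typeFinset n m := isType_mem_typeFinset hn hTtype
    have hterm_nonneg : ∀ ν ∈ (typeFinset n m).filter (fun ν => ν ∈ S), 0 ≤ typeProb n ν q :=
      fun ν _ => typeProb_nonneg hqpos
    have hTfil : T n ∈ (typeFinset n m).filter (fun ν => ν ∈ S) :=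
      Finset.mem_filter.2 ⟨hTmem, hTS⟩
    have hDge : typeProb n (T n) q ≤ D n := by
      simp only [hD]
      exact Finset.single_le_sum hterm_nonneg hTfil
    have hDpos : 0 < D n := lt_of_lt_of_le (typeProb_pos hqpos) hDge
    obtain ⟨kk, hks, hTeq⟩ := mem_typeFinset.1 hTmem
    have hii : Real.exp (-((n : ℝ) * (c + δ / 2))) ≤ ((n : ℝ) + 1) ^ m * D n := by
      have h1 : Real.exp (-((n : ℝ) * (c + δ / 2))) ≤ Real.exp (-((n : ℝ) * KL (T n) q)) := by
        apply Real.exp_le_exp.2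
        have h0 : (0 : ℝ) ≤ (n : ℝ) := n.cast_nonneg
        nlinarith [hKLn]
      have h2 : Real.exp (-((n : ℝ) * KL (T n) q)) ≤ ((n : ℝ) + 1) ^ m * typeProb n (T n) q := by
        rw [hTeq]
        exact exp_le_typeProb hn kk hks q hqpos
      calc Real.exp (-((n : ℝ) * (c + δ / 2)))
          ≤ ((n : ℝ) + 1) ^ m * typeProb n (T n) q := le_trans h1 h2
        _ ≤ ((n : ℝ) + 1) ^ m * D n := mul_le_mul_of_nonneg_left hDge (by positivity)
    have hi : F n ≤ ((n : ℝ) + 1) ^ m * Real.exp (-((n : ℝ) * (c + δ))) := by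
      have hbound : ∀ ν ∈ (typeFinset n m).filter (fun ν => ν ∈ S ∧ ν ∉ A),
          typeProb n ν q ≤ Real.exp (-((n : ℝ) * (c + δ))) := by
        intro ν hν
        rw [Finset.mem_filter] at hν
        obtain ⟨hνt, hνS, hνA⟩ := hν
        obtain ⟨kk', hks', rfl⟩ := mem_typeFinset.1 hνt
        have hKLν : c + δ ≤ KL (fun i => (kk' i : ℝ) / n) q := by
          apply hδbound _ (subset_closure hνS)
          intro j
          by_contra hcon
          push_neg at hcon
          apply hνA
          rw [hA]
          exact ⟨j, hcon⟩
        refine le_trans (typeProb_le_exp hn kk' hks' q hqpos) ?_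
        apply Real.exp_le_exp.2
        have h0 : (0 : ℝ) ≤ (n : ℝ) := n.cast_nonneg
        nlinarith
      have hcard : (((typeFinset n m).filter (fun ν => ν ∈ S ∧ ν ∉ A)).card : ℝ)
          ≤ ((n : ℝ) + 1) ^ m := by
        have h1 : ((typeFinset n m).filter (fun ν => ν ∈ S ∧ ν ∉ A)).card ≤ (n + 1) ^ m :=
          le_trans (Finset.card_filter_le _ _) card_typeFinset_le
        calc (((typeFinset n m).filter (fun ν => ν ∈ S ∧ ν ∉ A)).card : ℝ)
            ≤ (((n + 1) ^ m : ℕ) : ℝ) := Nat.cast_le.2 h1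
          _ = ((n : ℝ) + 1) ^ m := by push_cast; ring
      calc F n ≤ ((typeFinset n m).filter (fun ν => ν ∈ S ∧ ν ∉ A)).card
            • Real.exp (-((n : ℝ) * (c + δ))) := by
            simp only [hF]
            exact Finset.sum_le_card_nsmul _ _ _ hbound
        _ = (((typeFinset n m).filter (fun ν => ν ∈ S ∧ ν ∉ A)).card : ℝ)
            * Real.exp (-((n : ℝ) * (c + δ))) := nsmul_eq_mul _ _
        _ ≤ ((n : ℝ) + 1) ^ m * Real.exp (-((n : ℝ) * (c + δ))) :=
            mul_le_mul_of_nonneg_right hcard (Real.exp_nonneg _)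
    have hFleq : F n ≤ g n * D n := by
      have hsplit : Real.exp (-((n : ℝ) * (c + δ)))
          = Real.exp (-((n : ℝ) * (c + δ / 2))) * Real.exp (-((n : ℝ) * (δ / 2))) := by
        rw [← Real.exp_add]; ring_nf
      calc F n ≤ ((n : ℝ) + 1) ^ m * Real.exp (-((n : ℝ) * (c + δ))) := hi
        _ = ((n : ℝ) + 1) ^ m * Real.exp (-((n : ℝ) * (c + δ / 2)))
            * Real.exp (-((n : ℝ) * (δ / 2))) := by rw [hsplit]; ring
        _ ≤ ((n : ℝ) + 1) ^ m * (((n : ℝ) + 1) ^ m * D n)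
            * Real.exp (-((n : ℝ) * (δ / 2))) := by
            apply mul_le_mul_of_nonneg_right _ (Real.exp_nonneg _)
            exact mul_le_mul_of_nonneg_left hii (by positivity)
        _ = g n * D n := by
            simp only [hg]
            rw [two_mul, pow_add]
            ring
    have hsplitsum : (∑ ν ∈ (typeFinset n m).filter (fun ν => ν ∈ A ∩ S), typeProb n ν q)
        + F n = D n := by
      simp only [hD, hF]
      rw [← Finset.sum_filter_add_sum_filter_not
        ((typeFinset n m).filter (fun ν => ν ∈ S)) (fun ν => ν ∈ A) (fun ν => typeProb n ν q)]
      congr 1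
      · rw [Finset.filter_filter]
        apply Finset.sum_congr _ (fun _ _ => rfl)
        apply Finset.filter_congr
        intro ν _
        simp only [Set.mem_inter_iff]
        tauto
      · rw [Finset.filter_filter]
    have hcond : condProb n q A S = 1 - F n / D n := by
      unfold condProb
      have hnum : (∑ ν ∈ (typeFinset n m).filter (fun ν => ν ∈ A ∩ S), typeProb n ν q)
          = D n - F n := by linarith
      have hden : (∑ ν ∈ (typeFinset n m).filter (fun ν => ν ∈ S), typeProb n ν q) = D n := by
        simp only [hD]
      rw [hnum, hden]
      field_simp
    have hFnonneg : 0 ≤ F n := by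
      simp only [hF]
      exact Finset.sum_nonneg fun ν _ => typeProb_nonneg hqpos
    exact ⟨hDpos, hcond, div_nonneg hFnonneg hDpos.le, (div_le_iff₀ hDpos).2 hFleq⟩
  have hsq1 : Tendsto (fun n => 1 - g n) atTop (𝓝 1) := by
    have h0 : Tendsto g atTop (𝓝 0) := by
      rw [hg]
      exact tendsto_g (δ / 2) (by linarith) (2 * m)
    have h1 : Tendsto (fun n : ℕ => (1:ℝ) - g n) atTop (𝓝 (1 - 0)) :=
      tendsto_const_nhds.sub h0
    simpa using h1
  refine tendsto_of_tendsto_of_tendsto_of_le_of_le' hsq1 tendsto_const_nhds ?_ ?_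
  · filter_upwards [key] with n hn
    obtain ⟨hDpos, hcond, hge0, hle⟩ := hn
    rw [hcond]
    linarith
  · filter_upwards [key] with n hn
    obtain ⟨hDpos, hcond, hge0, hle⟩ := hn
    rw [hcond]
    linarith
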